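/- Let X be a linear order, m ≥ 1 an integer, and let a, b, c, d, e : Fin m → X be pairwise distinct functions. Then it is impossible that the equalities φ(a,b) = φ(c,d), φ(b,c) = φ(c,e), φ(a,d) = φ(b,e), φ(a,e) = φ(b,d), φ(a,c) = φ(d,e) all hold with the five common values pairwise distinct. (This is the impossibility, under the coloring (η₂, Δ), of a colored K₅ of color type (2,2,2,2,2) containing exactly one monochromatic copy of K_{1,2}.) -/
import Mathlib



noncomputable def eta {X : Type*} {m : ℕ} (v w : Fin m → X) : Option (Fin m × Sym2 X) := by
  classical
  exact if h : v ≠ w then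
    some (
      let i := (Finset.univ.filter fun i => v i ≠ w i).min' (by
        obtain ⟨i, hi⟩ := Function.ne_iff.mp h
        exact ⟨i, Finset.mem_filter.mpr ⟨Finset.mem_univ _, hi⟩⟩)
      (i, s(v i, w i)))
  else none

/-- Lexicographic order on functions `Fin m → X`: `v ≺ w` iff at the least index where
they differ, `v` is smaller. -/
def lexLt {X : Type*} [LinearOrder X] {m : ℕ} (v w : Fin m → X) : Prop :=
  ∃ i : Fin m, (∀ j : Fin m, j < i → v j = w j) ∧ v i < w i

/-- `Δ(v,w) : Fin m → {−1,0,+1}` compares `v` and `w` coordinatewise. -/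
def delta {X : Type*} [LinearOrder X] {m : ℕ} (v w : Fin m → X) : Fin m → ℤ :=
  fun i => if v i < w i then 1 else if v i = w i then 0 else -1

/-- The symmetric coloring `φ(v,w) := (η(v,w), Δ(min(v,w), max(v,w)))`, where min and max
are with respect to the lexicographic order. -/
noncomputable def phi {X : Type*} [LinearOrder X] {m : ℕ} (v w : Fin m → X) :
    Option (Fin m × Sym2 X) × (Fin m → ℤ) := by
  classical
  exact (eta v w, if lexLt v w then delta v w else delta w v)

section helpers
variable {X : Type*} {m : ℕ}

lemma eta_spec {v w : Fin m → X} (h : v ≠ w) :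
    ∃ I : Fin m, eta v w = some (I, s(v I, w I)) ∧ v I ≠ w I ∧ ∀ j, j < I → v j = w j := by
  classical
  have hne : (Finset.univ.filter fun i => v i ≠ w i).Nonempty := by
    obtain ⟨i, hi⟩ := Function.ne_iff.mp h
    exact ⟨i, Finset.mem_filter.mpr ⟨Finset.mem_univ _, hi⟩⟩
  refine ⟨(Finset.univ.filter fun i => v i ≠ w i).min' hne, ?_, ?_, ?_⟩
  · simp only [eta, dif_pos h]
  · have := Finset.min'_mem _ hne
    simpa using this
  · intro j hj
    by_contra hne'
    have hj' : j ∈ Finset.univ.filter fun i => v i ≠ w i := by simpa using hne'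
    exact absurd (Finset.min'_le _ _ hj') (not_le.mpr hj)

lemma fd_unique {v w : Fin m → X} {I J : Fin m} (hI1 : v I ≠ w I) (hI2 : ∀ j, j < I → v j = w j)
    (hJ1 : v J ≠ w J) (hJ2 : ∀ j, j < J → v j = w j) : I = J := by
  rcases lt_trichotomy I J with h | h | h
  · exact absurd (hJ2 I h) hI1
  · exact h
  · exact absurd (hI2 J h) hJ1

lemma eta_eq_extract {v w v' w' : Fin m → X} (h : v ≠ w) (h' : v' ≠ w')
    (he : eta v w = eta v' w') :
    ∃ I : Fin m, (v I ≠ w I) ∧ (∀ j, j < I → v j = w j) ∧ (v' I ≠ w' I) ∧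
      (∀ j, j < I → v' j = w' j) ∧ s(v I, w I) = s(v' I, w' I) := by
  obtain ⟨I, e1, d1, a1⟩ := eta_spec h
  obtain ⟨J, e2, d2, a2⟩ := eta_spec h'
  rw [e1, e2, Option.some.injEq, Prod.mk.injEq] at he
  obtain ⟨hIJ, hs⟩ := he
  subst hIJ
  exact ⟨I, d1, a1, d2, a2, hs⟩

section lin
variable [LinearOrder X]

lemma lexLt_iff' {v w : Fin m → X} {I : Fin m} (hI1 : v I ≠ w I)
    (hI2 : ∀ j, j < I → v j = w j) : lexLt v w ↔ v I < w I := by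
  constructor
  · rintro ⟨i, hag, hlt⟩
    rcases lt_trichotomy i I with h | h | h
    · exact absurd (hI2 i h) hlt.ne
    · exact h ▸ hlt
    · exact absurd (hag I h) hI1
  · exact fun h => ⟨I, hI2, h⟩

/-- pointwise comparison value -/
lemma delta_apply (v w : Fin m → X) (j : Fin m) :
    delta v w j = if v j < w j then 1 else if v j = w j then 0 else -1 := rfl

lemma delta_neg (v w : Fin m → X) (j : Fin m) : delta w v j = - delta v w j := by
  simp only [delta]
  rcases lt_trichotomy (v j) (w j) with h | h | h
  · rw [if_neg (asymm h), if_neg h.ne', if_pos h]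
  · rw [if_neg (by rw [h]; exact lt_irrefl _), if_pos h.symm,
      if_neg (by rw [h]; exact lt_irrefl _), if_pos h]; norm_num
  · rw [if_pos h, if_neg (asymm h), if_neg h.ne']; norm_num

lemma delta_zero_of_eq {v w : Fin m → X} {j : Fin m} (h : v j = w j) : delta v w j = 0 := by
  simp [delta, h]

lemma eq_of_delta_zero {v w : Fin m → X} {j : Fin m} (h : delta v w j = 0) : v j = w j := by
  simp only [delta] at h
  split_ifs at h with h1 h2
  · exact absurd h one_ne_zero
  · exact h2

lemma phi_eta {v w v' w' : Fin m → X} (h : phi v w = phi v' w') : eta v w = eta v' w' :=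
  congrArg Prod.fst h

lemma phi_delta_pp {v w v' w' : Fin m → X} (h : phi v w = phi v' w')
    (hl : lexLt v w) (hl' : lexLt v' w') : delta v w = delta v' w' := by
  have h2 := congrArg Prod.snd h
  simp only [phi] at h2
  rwa [if_pos hl, if_pos hl'] at h2

lemma phi_delta_pn {v w v' w' : Fin m → X} (h : phi v w = phi v' w')
    (hl : lexLt v w) (hl' : ¬ lexLt v' w') : delta v w = delta w' v' := by
  have h2 := congrArg Prod.snd h
  simp only [phi] at h2
  rwa [if_pos hl, if_neg hl'] at h2

lemma phi_delta_nn {v w v' w' : Fin m → X} (h : phi v w = phi v' w')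
    (hl : ¬ lexLt v w) (hl' : ¬ lexLt v' w') : delta w v = delta w' v' := by
  have h2 := congrArg Prod.snd h
  simp only [phi] at h2
  rwa [if_neg hl, if_neg hl'] at h2

lemma phi_delta_np {v w v' w' : Fin m → X} (h : phi v w = phi v' w')
    (hl : ¬ lexLt v w) (hl' : lexLt v' w') : delta w v = delta v' w' := by
  have h2 := congrArg Prod.snd h
  simp only [phi] at h2
  rwa [if_neg hl, if_pos hl'] at h2

lemma delta_one_of_lt {v w : Fin m → X} {j : Fin m} (h : v j < w j) : delta v w j = 1 := by
  simp [delta, h]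

lemma lt_of_delta_one {v w : Fin m → X} {j : Fin m} (h : delta v w j = 1) : v j < w j := by
  simp only [delta] at h
  split_ifs at h with h1 h2
  · exact h1
  · exact absurd h (by norm_num)

lemma delta_negone_of_gt {v w : Fin m → X} {j : Fin m} (h : w j < v j) : delta v w j = -1 := by
  simp [delta, asymm h, h.ne']

lemma gt_of_delta_negone {v w : Fin m → X} {j : Fin m} (h : delta v w j = -1) : w j < v j := by
  simp only [delta] at h
  split_ifs at h with h1 h2
  · exact lt_of_le_of_ne (not_lt.mp h1) (fun heq => h2 heq.symm)

end lin
end helpers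

/-- Under the coloring `φ = (η, Δ)` there is no colored `K₅` of color type `(2,2,2,2,2)`
containing exactly one monochromatic copy of `K_{1,2}`: the pattern
`φ(a,b)=φ(c,d)`, `φ(b,c)=φ(c,e)`, `φ(a,d)=φ(b,e)`, `φ(a,e)=φ(b,d)`, `φ(a,c)=φ(d,e)`
with the five common values pairwise distinct is impossible. -/
theorem no_K5_one_mono_cherry {X : Type*} [LinearOrder X] {m : ℕ} (hm : 1 ≤ m)
    (a b c d e : Fin m → X)
    (hab : a ≠ b) (hac : a ≠ c) (had : a ≠ d) (hae : a ≠ e)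
    (hbc : b ≠ c) (hbd : b ≠ d) (hbe : b ≠ e)
    (hcd : c ≠ d) (hce : c ≠ e) (hde : d ≠ e) :
    ¬ (phi a b = phi c d ∧ phi b c = phi c e ∧ phi a d = phi b e ∧
       phi a e = phi b d ∧ phi a c = phi d e ∧
       phi a b ≠ phi b c ∧ phi a b ≠ phi a d ∧ phi a b ≠ phi a e ∧ phi a b ≠ phi a c ∧
       phi b c ≠ phi a d ∧ phi b c ≠ phi a e ∧ phi b c ≠ phi a c ∧
       phi a d ≠ phi a e ∧ phi a d ≠ phi a c ∧
       phi a e ≠ phi a c) := by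
  rintro ⟨h1, h2, h3, h4, h5, -, -, -, -, -, -, -, -, -, -⟩
  -- the monochromatic cherry at c
  obtain ⟨i, hbc1, hbc2, hce1, hce2, hs2⟩ := eta_eq_extract hbc hce (phi_eta h2)
  have hbei : b i = e i := by
    rcases Sym2.eq_iff.mp hs2 with ⟨h6, h7⟩ | ⟨h6, h7⟩
    · exact absurd h6 hbc1
    · exact h6
  obtain ⟨p, had1, had2, hbe1, hbe2, hs3⟩ := eta_eq_extract had hbe (phi_eta h3)
  have hip : i < p := by
    rcases lt_trichotomy p i with h | h | h
    · exact absurd ((hbc2 p h).trans (hce2 p h)) hbe1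
    · exact absurd (h ▸ hbei) hbe1
    · exact h
  obtain ⟨q, hab1, hab2, hcd1, hcd2, hs1⟩ := eta_eq_extract hab hcd (phi_eta h1)
  rcases lt_trichotomy q i with hqi | hqi | hqi
  · -- main case : q < i
    obtain ⟨s, hac1, hac2, hde1, hde2, -⟩ := eta_eq_extract hac hde (phi_eta h5)
    have hsq : s = q := by
      refine fd_unique hac1 hac2 ?_ ?_
      · exact fun h => hab1 (h.trans (hbc2 q hqi).symm)
      · exact fun j hj => (hab2 j hj).trans (hbc2 j (hj.trans hqi))
    subst hsq
    have hadq : a s = d s := had2 s (hqi.trans hip)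
    have hbcq : b s = c s := hbc2 s hqi
    have hceq : c s = e s := hce2 s hqi
    have lab := lexLt_iff' hab1 hab2
    have lcd := lexLt_iff' hcd1 hcd2
    have lac := lexLt_iff' hac1 hac2
    have lde := lexLt_iff' hde1 hde2
    have D1 : ∀ j, delta a b j = delta d c j := by
      rcases lt_or_gt_of_ne hab1 with hlt | hlt
      · have hdc : d s < c s := by rw [← hadq, ← hbcq]; exact hlt
        have e1 := phi_delta_pn h1 (lab.mpr hlt) (by rw [lcd]; exact not_lt.mpr hdc.le)
        exact fun j => congrFun e1 j
      · have hdc : c s < d s := by rw [← hadq, ← hbcq]; exact hlt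
        have e1 := phi_delta_np h1 (by rw [lab]; exact not_lt.mpr hlt.le) (lcd.mpr hdc)
        intro j
        have h6 := congrFun e1 j
        rw [delta_neg a b j, delta_neg d c j] at h6
        exact neg_inj.mp h6
    have D5 : ∀ j, delta a c j = delta d e j := by
      rcases lt_or_gt_of_ne hab1 with hlt | hlt
      · have hac' : a s < c s := by rw [← hbcq]; exact hlt
        have hde' : d s < e s := by rw [← hadq, ← hceq, ← hbcq]; exact hlt
        have e1 := phi_delta_pp h5 (lac.mpr hac') (lde.mpr hde')
        exact fun j => congrFun e1 j
      · have hac' : c s < a s := by rw [← hbcq]; exact hlt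
        have hde' : e s < d s := by rw [← hadq, ← hceq, ← hbcq]; exact hlt
        have e1 := phi_delta_nn h5 (by rw [lac]; exact not_lt.mpr hac'.le)
          (by rw [lde]; exact not_lt.mpr hde'.le)
        intro j
        have h6 := congrFun e1 j
        rw [delta_neg a c j, delta_neg d e j] at h6
        exact neg_inj.mp h6
    rcases Sym2.eq_iff.mp hs3 with ⟨f1, f2⟩ | ⟨f1, f2⟩
    · -- a p = b p, d p = e p
      have t1 := D1 p
      rw [delta_zero_of_eq f1] at t1
      have hdc : d p = c p := eq_of_delta_zero t1.symm
      have t5 := D5 p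
      rw [delta_zero_of_eq f2] at t5
      exact had1 ((eq_of_delta_zero t5).trans hdc.symm)
    · -- a p = e p, d p = b p
      have t1 := D1 p
      have t5 := D5 p
      rcases lt_trichotomy (a p) (d p) with h | h | h
      · have h7 : delta a b p = 1 := delta_one_of_lt (f2 ▸ h)
        have h8 : d p < c p := lt_of_delta_one (t1 ▸ h7)
        have h9 : delta d e p = -1 := delta_negone_of_gt (f1 ▸ h)
        have h10 : c p < a p := gt_of_delta_negone (t5.trans h9)
        exact absurd (h.trans h8) (not_lt.mpr h10.le)
      · exact had1 h
      · have h7 : delta a b p = -1 := delta_negone_of_gt (f2 ▸ h)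
        have h8 : c p < d p := gt_of_delta_negone (t1 ▸ h7)
        have h9 : delta d e p = 1 := delta_one_of_lt (f1 ▸ h)
        have h10 : a p < c p := lt_of_delta_one (t5.trans h9)
        exact absurd (h10.trans h8) (not_lt.mpr h.le)
  · -- case q = i
    subst hqi
    rcases Sym2.eq_iff.mp hs1 with ⟨u1, u2⟩ | ⟨u1, u2⟩
    · exact hab1 ((had2 q hip).trans u2.symm)
    · exact hbc1 u2
  · -- case i < q
    obtain ⟨r, hae1, hae2, hbd1, hbd2, -⟩ := eta_eq_extract hae hbd (phi_eta h4)
    have hri : r = i := by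
      refine fd_unique hbd1 hbd2 ?_ ?_
      · exact fun h => hbc1 (h.trans (hcd2 i hqi).symm)
      · exact fun j hj => (hbc2 j hj).trans (hcd2 j (hj.trans hqi))
    subst hri
    exact hae1 ((hab2 r hqi).trans hbei)
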